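/- Assume n_i > 0 and O_i ≠ 0 for all i = 1,…,N, assume D_i = O_i + w_i ≠ 0 for all i, assume ⟨V⟩_α ≠ 0 and ⟨V⟩_α + w ≠ 0, and assume that α is a normalized eigenvector centrality of the orientation network, i.e. α_j = Σ_{i=1}^N α_i ω_{ij}/n_i for every j = 1,…,N. Then the residual vector ε_α = ⟨φ(D)⟩_α − ‖⟨V⟩_α‖ · φ(⟨V⟩_α + w) satisfies ‖ε_α‖ ≤ 2‖w‖²/‖⟨V⟩_α‖ + Σ_{i=1}^N α_i π̃_i + 2 Σ_{i=1}^N α_i ρ_i (π̃_α + ρ_i + 2π̃_i + √(Q_{i,n_iα})). -/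

import Mathlib

/-!
Linearize the normalization `φ` at each `O i` and at `⟨V⟩_α`: with `P x` the orthogonal projection
onto `(ℝ ∙ x)ᗮ`, `φ (x + h) - φ x - ‖x‖⁻¹ • P x h` has norm at most `2 ‖h‖² / ‖x‖²`.
Replacing `φ (O i)` by `O i / n i` and `‖O i‖⁻¹` by `(n i)⁻¹` costs `π̃ i`, and replacing
`P (O i)` by `P ⟨V⟩_α` costs twice the distance between `φ (O i)` and `φ ⟨V⟩_α`, which is at most
`π̃ i + ‖O i / n i - ⟨V⟩_α‖ + π̃_α`. After these replacements the eigenvector condition, in the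
form `∑ i, (α i / n i) • O i = ⟨V⟩_α`, turns the weighted sum of the linearizations at the `O i`
into `‖⟨V⟩_α‖` times the linearization at `⟨V⟩_α`. Finally the weights `c j = ω i j / n i - α j`
have total mass zero, so `‖O i / n i - ⟨V⟩_α‖² = -∑ c j c j' ‖V j - V j'‖² / 2 ≤ Q i`, the chord
`‖V j - V j'‖` being at most the arc `θ j j'`.
-/

open Finset
open scoped BigOperators RealInnerProductSpace

/-- Normalization operator `φ(x) = x / ‖x‖` on `ℝ³`. -/
noncomputable def phi (x : EuclideanSpace ℝ (Fin 3)) : EuclideanSpace ℝ (Fin 3) := ‖x‖⁻¹ • x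

open InnerProductGeometry

section Normalization

variable {E : Type*} [NormedAddCommGroup E] [InnerProductSpace ℝ E]

lemma starProjection_orthogonal_singleton (x v : E) :
    (ℝ ∙ x)ᗮ.starProjection v = v - (⟪x, v⟫ / ‖x‖ ^ 2) • x := by
  rw [Submodule.starProjection_orthogonal_val, Submodule.starProjection_singleton]
  simp

lemma starProjection_orthogonal_unit_singleton {u : E} (hu : ‖u‖ = 1) (v : E) :
    (ℝ ∙ u)ᗮ.starProjection v = v - ⟪u, v⟫ • u := by
  rw [starProjection_orthogonal_singleton, hu, one_pow, div_one]

lemma starProjection_orthogonal_singleton_inv_norm_smul (x v : E) :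
    (ℝ ∙ x)ᗮ.starProjection v = v - ⟪‖x‖⁻¹ • x, v⟫ • (‖x‖⁻¹ • x) := by
  rw [starProjection_orthogonal_singleton, real_inner_smul_left, smul_smul]
  congr 2
  ring

/-- With `A = r - 1`, `B = r - p` (`r = ‖x + h‖`, `p = ⟪x, x + h⟫`, `‖x‖ = 1`), the left side is
`r` times the squared linearization error of the normalization and `A ^ 2 + 2 * B = ‖h‖ ^ 2`. -/
lemma normalization_error_polynomial_le {A B : ℝ} (hB : 0 ≤ B) (hBA : B ≤ 2 * (A + 1)) :
    B * (2 * A ^ 2 - A * B + B) ≤ 4 * (A + 1) * (A ^ 2 + 2 * B) ^ 2 := by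
  nlinarith [sq_nonneg (A ^ 2 + 2 * B), sq_nonneg A, sq_nonneg (A + 1), mul_nonneg hB hB,
    mul_nonneg hB (sq_nonneg A), mul_nonneg (mul_nonneg hB hB) hB,
    mul_nonneg (sub_nonneg.2 hBA) (sq_nonneg A), mul_nonneg (sub_nonneg.2 hBA) hB,
    mul_nonneg (mul_nonneg (sub_nonneg.2 hBA) hB) hB]

lemma norm_normalize_add_sub_le_of_norm_eq_one {x h : E} (hx : ‖x‖ = 1) (hxh : x + h ≠ 0) :
    ‖‖x + h‖⁻¹ • (x + h) - x - (ℝ ∙ x)ᗮ.starProjection h‖ ≤ 2 * ‖h‖ ^ 2 := by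
  rw [starProjection_orthogonal_unit_singleton hx]
  set y := x + h with hy
  set r := ‖y‖
  set p := ⟪x, y⟫
  have hr : 0 < r := norm_pos_iff.2 hxh
  obtain ⟨hpr', hpr⟩ : -r ≤ p ∧ p ≤ r := abs_le.1 <| by
    simpa [hx] using abs_real_inner_le_norm x y
  have hxh_inner : ⟪x, h⟫ = p - 1 := by
    have : p = ⟪x, x⟫ + ⟪x, h⟫ := inner_add_right _ _ _
    rw [real_inner_self_eq_norm_sq, hx] at this
    linarith
  have hh : ‖h‖ ^ 2 = (r - 1) ^ 2 + 2 * (r - p) := by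
    rw [show h = y - x from (add_sub_cancel_left x h).symm, norm_sub_sq_real, real_inner_comm, hx]
    ring
  have hvec : r⁻¹ • y - x - (h - ⟪x, h⟫ • x) = (r⁻¹ - 1) • y + (p - 1) • x := by
    rw [hxh_inner, hy]
    module
  have hsq : ‖(r⁻¹ - 1) • y + (p - 1) • x‖ ^ 2 * r
      = (r - p) * (2 * (r - 1) ^ 2 - (r - 1) * (r - p) + (r - p)) := by
    rw [norm_add_sq_real, real_inner_smul_left, real_inner_smul_right, norm_smul, norm_smul,
      real_inner_comm, hx]
    simp only [Real.norm_eq_abs, mul_pow, sq_abs]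
    field_simp
    ring
  rw [hvec, ← pow_le_pow_iff_left₀ (norm_nonneg _) (by positivity) two_ne_zero,
    ← mul_le_mul_iff_of_pos_right hr, hsq]
  have := normalization_error_polynomial_le (A := r - 1) (B := r - p) (by linarith) (by linarith)
  rw [← hh] at this
  linarith

lemma inv_norm_smul_smul_of_pos {c : ℝ} (hc : 0 < c) (y : E) :
    ‖c • y‖⁻¹ • (c • y) = ‖y‖⁻¹ • y := by
  rw [norm_smul, Real.norm_of_nonneg hc.le, smul_smul, mul_inv, mul_right_comm,
    inv_mul_cancel₀ hc.ne', one_mul]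

lemma norm_normalize_add_sub_le {x h : E} (hx : x ≠ 0) (hxh : x + h ≠ 0) :
    ‖‖x + h‖⁻¹ • (x + h) - ‖x‖⁻¹ • x - ‖x‖⁻¹ • (ℝ ∙ x)ᗮ.starProjection h‖ ≤
      2 * ‖h‖ ^ 2 / ‖x‖ ^ 2 := by
  have ha : 0 < ‖x‖ := norm_pos_iff.2 hx
  have hx1 : ‖‖x‖⁻¹ • x‖ = 1 := norm_smul_inv_norm hx
  have hunit := norm_normalize_add_sub_le_of_norm_eq_one (h := ‖x‖⁻¹ • h) hx1
    (by rw [← smul_add]; exact smul_ne_zero (by positivity) hxh)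
  rw [← smul_add, inv_norm_smul_smul_of_pos (by positivity),
    starProjection_orthogonal_unit_singleton hx1, norm_smul, norm_inv,
    norm_norm, real_inner_smul_right] at hunit
  rw [starProjection_orthogonal_singleton_inv_norm_smul]
  convert hunit using 2
  · module
  · field_simp

lemma norm_starProjection_orthogonal_singleton_sub_le {a b : E} (ha : a ≠ 0) (hb : b ≠ 0)
    (v : E) :
    ‖(ℝ ∙ a)ᗮ.starProjection v - (ℝ ∙ b)ᗮ.starProjection v‖ ≤
      2 * ‖‖a‖⁻¹ • a - ‖b‖⁻¹ • b‖ * ‖v‖ := by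
  rw [starProjection_orthogonal_singleton_inv_norm_smul,
    starProjection_orthogonal_singleton_inv_norm_smul]
  have hu : ‖‖a‖⁻¹ • a‖ = 1 := norm_smul_inv_norm ha
  have hu' : ‖‖b‖⁻¹ • b‖ = 1 := norm_smul_inv_norm hb
  set u := ‖a‖⁻¹ • a
  set u' := ‖b‖⁻¹ • b
  have hsplit : v - ⟪u, v⟫ • u - (v - ⟪u', v⟫ • u') = -(⟪u - u', v⟫ • u + ⟪u', v⟫ • (u - u')) := by
    rw [inner_sub_left]
    module
  calc ‖v - ⟪u, v⟫ • u - (v - ⟪u', v⟫ • u')‖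
      ≤ |⟪u - u', v⟫| * ‖u‖ + |⟪u', v⟫| * ‖u - u'‖ := by
        rw [hsplit, norm_neg, ← Real.norm_eq_abs, ← Real.norm_eq_abs, ← norm_smul, ← norm_smul]
        exact norm_add_le _ _
    _ ≤ ‖u - u'‖ * ‖v‖ * ‖u‖ + ‖u'‖ * ‖v‖ * ‖u - u'‖ := by
        gcongr <;> exact abs_real_inner_le_norm _ _
    _ = 2 * ‖u - u'‖ * ‖v‖ := by
        rw [hu, hu']
        ring

lemma norm_smul_inv_norm_sub_inv_smul {x : E} {t : ℝ} (hx : x ≠ 0) (hxt : ‖x‖ ≤ t) :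
    ‖‖x‖⁻¹ • x - t⁻¹ • x‖ = 1 - ‖x‖ / t := by
  have hx' : 0 < ‖x‖ := norm_pos_iff.2 hx
  have hle : t⁻¹ ≤ ‖x‖⁻¹ := inv_anti₀ hx' hxt
  rw [← sub_smul, norm_smul, Real.norm_of_nonneg (sub_nonneg.2 hle), sub_mul,
    inv_mul_cancel₀ hx'.ne', inv_mul_eq_div]

lemma norm_normalize_sub_normalize_le {x y : E} {t : ℝ} (hx : x ≠ 0) (hxt : ‖x‖ ≤ t)
    (hy : y ≠ 0) (hy1 : ‖y‖ ≤ 1) :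
    ‖‖x‖⁻¹ • x - ‖y‖⁻¹ • y‖ ≤ (1 - ‖x‖ / t) + ‖t⁻¹ • x - y‖ + (1 - ‖y‖) := by
  have hy' : ‖y - ‖y‖⁻¹ • y‖ = 1 - ‖y‖ := by
    simpa [norm_sub_rev] using norm_smul_inv_norm_sub_inv_smul hy hy1
  calc ‖‖x‖⁻¹ • x - ‖y‖⁻¹ • y‖
      = ‖(‖x‖⁻¹ • x - t⁻¹ • x) + (t⁻¹ • x - y) + (y - ‖y‖⁻¹ • y)‖ := by
        congr 1; abel
    _ ≤ _ := by
        refine norm_add₃_le.trans_eq ?_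
        rw [norm_smul_inv_norm_sub_inv_smul hx hxt, hy']

lemma norm_normalize_add_sub_inv_smul_le {x h z : E} {t : ℝ} (hx : x ≠ 0) (hxh : x + h ≠ 0)
    (hz : z ≠ 0) (hxt : ‖x‖ ≤ t) :
    ‖‖x + h‖⁻¹ • (x + h) - t⁻¹ • (x + (ℝ ∙ z)ᗮ.starProjection h)‖ ≤
      (1 - ‖x‖ / t) +
        ‖h‖ / ‖x‖ * (2 * (‖h‖ / ‖x‖) + (1 - ‖x‖ / t) + 2 * ‖‖x‖⁻¹ • x - ‖z‖⁻¹ • z‖) := by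
  have hx' : 0 < ‖x‖ := norm_pos_iff.2 hx
  set P := (ℝ ∙ x)ᗮ.starProjection h
  set Pz := (ℝ ∙ z)ᗮ.starProjection h
  have hsplit : ‖x + h‖⁻¹ • (x + h) - t⁻¹ • (x + Pz)
      = (‖x + h‖⁻¹ • (x + h) - ‖x‖⁻¹ • x - ‖x‖⁻¹ • P) + (‖x‖⁻¹ • x - t⁻¹ • x)
        + ‖x‖⁻¹ • (P - Pz) + (‖x‖⁻¹ - t⁻¹) • Pz := by
    module
  have hlin := norm_normalize_add_sub_le hx hxh
  have hproj : ‖‖x‖⁻¹ • (P - Pz)‖ ≤ ‖h‖ / ‖x‖ * (2 * ‖‖x‖⁻¹ • x - ‖z‖⁻¹ • z‖) := by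
    rw [norm_smul, norm_inv, norm_norm, inv_mul_le_iff₀ hx']
    calc ‖P - Pz‖ ≤ 2 * ‖‖x‖⁻¹ • x - ‖z‖⁻¹ • z‖ * ‖h‖ :=
          norm_starProjection_orthogonal_singleton_sub_le hx hz h
      _ = ‖x‖ * (‖h‖ / ‖x‖ * (2 * ‖‖x‖⁻¹ • x - ‖z‖⁻¹ • z‖)) := by
          field_simp
  have hscale : ‖(‖x‖⁻¹ - t⁻¹) • Pz‖ ≤ ‖h‖ / ‖x‖ * (1 - ‖x‖ / t) := by
    rw [norm_smul, Real.norm_of_nonneg (sub_nonneg.2 (inv_anti₀ hx' hxt))]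
    calc (‖x‖⁻¹ - t⁻¹) * ‖Pz‖ ≤ (‖x‖⁻¹ - t⁻¹) * ‖h‖ := by
          gcongr
          · exact sub_nonneg.2 (inv_anti₀ hx' hxt)
          · exact Submodule.norm_starProjection_apply_le _ _
      _ = ‖h‖ / ‖x‖ * (1 - ‖x‖ / t) := by
          field_simp
  rw [hsplit]
  refine norm_add₄_le.trans ?_
  rw [norm_smul_inv_norm_sub_inv_smul hx hxt]
  have hsq : 2 * ‖h‖ ^ 2 / ‖x‖ ^ 2 = ‖h‖ / ‖x‖ * (2 * (‖h‖ / ‖x‖)) := by ring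
  linarith

lemma norm_norm_smul_normalize_add_sub_le {y k : E} (hy : y ≠ 0) (hyk : y + k ≠ 0) :
    ‖‖y‖ • (‖y + k‖⁻¹ • (y + k)) - (y + (ℝ ∙ y)ᗮ.starProjection k)‖ ≤ 2 * ‖k‖ ^ 2 / ‖y‖ := by
  have hy' : 0 < ‖y‖ := norm_pos_iff.2 hy
  have hvec : ‖y‖ • (‖y + k‖⁻¹ • (y + k)) - (y + (ℝ ∙ y)ᗮ.starProjection k)
      = ‖y‖ • (‖y + k‖⁻¹ • (y + k) - ‖y‖⁻¹ • y - ‖y‖⁻¹ • (ℝ ∙ y)ᗮ.starProjection k) := by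
    rw [smul_sub, smul_sub, smul_inv_smul₀ hy'.ne', smul_inv_smul₀ hy'.ne']
    abel
  rw [hvec, norm_smul, norm_norm]
  calc ‖y‖ * _ ≤ ‖y‖ * (2 * ‖k‖ ^ 2 / ‖y‖ ^ 2) := by
        gcongr
        exact norm_normalize_add_sub_le hy hyk
    _ = 2 * ‖k‖ ^ 2 / ‖y‖ := by
        field_simp

theorem norm_sum_smul_normalize_sub_le {ι : Type*} [Fintype ι] {α n d : ι → ℝ} {x h : ι → E}
    {y k : E} (hα : ∀ i, 0 ≤ α i) (hx : ∀ i, x i ≠ 0) (hxh : ∀ i, x i + h i ≠ 0)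
    (hxn : ∀ i, ‖x i‖ ≤ n i) (hy : y ≠ 0) (hy1 : ‖y‖ ≤ 1) (hyk : y + k ≠ 0)
    (hmean : ∑ i, (α i / n i) • x i = y) (hk : ∑ i, (α i / n i) • h i = k)
    (hd : ∀ i, ‖(n i)⁻¹ • x i - y‖ ≤ d i) :
    ‖∑ i, α i • (‖x i + h i‖⁻¹ • (x i + h i)) - ‖y‖ • (‖y + k‖⁻¹ • (y + k))‖ ≤
      2 * ‖k‖ ^ 2 / ‖y‖ + ∑ i, α i * (1 - ‖x i‖ / n i)
      + 2 * ∑ i, α i * (‖h i‖ / ‖x i‖) *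
          ((1 - ‖y‖) + ‖h i‖ / ‖x i‖ + 2 * (1 - ‖x i‖ / n i) + d i) := by
  set P := (ℝ ∙ y)ᗮ.starProjection
  have hdefect : ∀ i, 0 ≤ 1 - ‖x i‖ / n i := fun i =>
    sub_nonneg.2 <| (div_le_one ((norm_pos_iff.2 (hx i)).trans_le (hxn i))).2 (hxn i)
  have hnode : ∀ i, ‖‖x i + h i‖⁻¹ • (x i + h i) - (n i)⁻¹ • (x i + P (h i))‖ ≤
      (1 - ‖x i‖ / n i) + 2 * ((‖h i‖ / ‖x i‖) *
        ((1 - ‖y‖) + ‖h i‖ / ‖x i‖ + 2 * (1 - ‖x i‖ / n i) + d i)) := by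
    intro i
    refine (norm_normalize_add_sub_inv_smul_le (hx i) (hxh i) hy (hxn i)).trans ?_
    have hρ : 0 ≤ ‖h i‖ / ‖x i‖ := by positivity
    have hdist : ‖‖x i‖⁻¹ • x i - ‖y‖⁻¹ • y‖ ≤ (1 - ‖x i‖ / n i) + d i + (1 - ‖y‖) := by
      linarith [norm_normalize_sub_normalize_le (hx i) (hxn i) hy hy1, hd i]
    nlinarith [mul_le_mul_of_nonneg_left hdist hρ, mul_nonneg hρ (hdefect i)]
  have hmean' : ∑ i, α i • ((n i)⁻¹ • (x i + P (h i))) = y + P k := by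
    rw [← hmean, ← hk, map_sum, ← sum_add_distrib]
    refine sum_congr rfl fun i _ => ?_
    rw [map_smul, smul_smul, smul_add, div_eq_mul_inv]
  have hsplit : ∑ i, α i • (‖x i + h i‖⁻¹ • (x i + h i)) - ‖y‖ • (‖y + k‖⁻¹ • (y + k))
      = ∑ i, α i • (‖x i + h i‖⁻¹ • (x i + h i) - (n i)⁻¹ • (x i + P (h i)))
        - (‖y‖ • (‖y + k‖⁻¹ • (y + k)) - (y + P k)) := by
    simp only [smul_sub, sum_sub_distrib, hmean']
    abel
  have hsum : ∑ i, α i * ((1 - ‖x i‖ / n i) + 2 * ((‖h i‖ / ‖x i‖) *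
        ((1 - ‖y‖) + ‖h i‖ / ‖x i‖ + 2 * (1 - ‖x i‖ / n i) + d i)))
      = ∑ i, α i * (1 - ‖x i‖ / n i) + 2 * ∑ i, α i * (‖h i‖ / ‖x i‖) *
          ((1 - ‖y‖) + ‖h i‖ / ‖x i‖ + 2 * (1 - ‖x i‖ / n i) + d i) := by
    rw [mul_sum, ← sum_add_distrib]
    exact sum_congr rfl fun i _ => by ring
  rw [hsplit]
  refine (norm_sub_le _ _).trans ?_
  have hterms : ‖∑ i, α i • (‖x i + h i‖⁻¹ • (x i + h i) - (n i)⁻¹ • (x i + P (h i)))‖ ≤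
      ∑ i, α i * ((1 - ‖x i‖ / n i) + 2 * ((‖h i‖ / ‖x i‖) *
        ((1 - ‖y‖) + ‖h i‖ / ‖x i‖ + 2 * (1 - ‖x i‖ / n i) + d i))) :=
    (norm_sum_le _ _).trans <| sum_le_sum fun i _ => by
      rw [norm_smul, Real.norm_of_nonneg (hα i)]
      exact mul_le_mul_of_nonneg_left (hnode i) (hα i)
  linarith [norm_norm_smul_normalize_add_sub_le hy hyk]

end Normalization

section Network

variable {E : Type*} [NormedAddCommGroup E] [InnerProductSpace ℝ E] {ι : Type*} [Fintype ι]

lemma norm_sum_smul_le_sum_of_norm_eq_one {c : ι → ℝ} {V : ι → E} (hc : ∀ j, 0 ≤ c j)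
    (hV : ∀ j, ‖V j‖ = 1) : ‖∑ j, c j • V j‖ ≤ ∑ j, c j :=
  (norm_sum_le _ _).trans_eq <| sum_congr rfl fun j _ => by
    rw [norm_smul, hV, Real.norm_of_nonneg (hc j), mul_one]

lemma sum_div_smul_sum_smul_eq_of_stationary {M : Type*} [AddCommMonoid M] [Module ℝ M]
    {α n : ι → ℝ} {ω : ι → ι → ℝ} (V : ι → M) (hα : ∀ j, α j = ∑ i, α i * ω i j / n i) :
    ∑ i, (α i / n i) • ∑ j, ω i j • V j = ∑ j, α j • V j := by
  simp_rw [smul_sum, smul_smul]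
  rw [sum_comm]
  refine sum_congr rfl fun j _ => ?_
  rw [hα j, sum_smul]
  exact sum_congr rfl fun i _ => by ring_nf

lemma norm_sub_sq_le_angle_sq {u v : E} (hu : ‖u‖ = 1) (hv : ‖v‖ = 1) :
    ‖u - v‖ ^ 2 ≤ angle u v ^ 2 := by
  have hcos : ⟪u, v⟫ = Real.cos (angle u v) := by
    rw [cos_angle, hu, hv, mul_one, div_one]
  rw [norm_sub_sq_real, hu, hv, hcos]
  linarith [Real.one_sub_sq_div_two_le_cos (x := angle u v)]

lemma norm_sum_smul_sq_le_of_sum_eq_zero {c : ι → ℝ} {V : ι → E} (hV : ∀ j, ‖V j‖ = 1)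
    (hc : ∑ j, c j = 0) :
    ‖∑ j, c j • V j‖ ^ 2 ≤ ∑ j, ∑ j', |c j| * |c j'| * angle (V j) (V j') ^ 2 / 2 := by
  have hterm : ∀ j j', -(c j * c j') * ‖V j - V j'‖ ^ 2 ≤ |c j| * |c j'| * angle (V j) (V j') ^ 2 :=
    fun j j' => calc
      -(c j * c j') * ‖V j - V j'‖ ^ 2 ≤ |c j * c j'| * ‖V j - V j'‖ ^ 2 := by
        gcongr; exact neg_le_abs _
      _ ≤ |c j| * |c j'| * angle (V j) (V j') ^ 2 := by
        rw [abs_mul]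
        exact mul_le_mul_of_nonneg_left (norm_sub_sq_le_angle_sq (hV j) (hV j')) (by positivity)
  calc ‖∑ j, c j • V j‖ ^ 2 = ∑ j, ∑ j', -(c j * c j') * ‖V j - V j'‖ ^ 2 / 2 := by
        rw [← real_inner_self_eq_norm_sq, inner_sum_smul_sum_smul_of_sum_eq_zero V hc V hc]
        simp only [neg_mul, neg_div, sum_neg_distrib, ← sum_div, sq]
    _ ≤ _ := sum_le_sum fun j _ => sum_le_sum fun j' _ =>
        div_le_div_of_nonneg_right (hterm j j') zero_le_two

lemma norm_inv_smul_sum_smul_sub_sum_smul_le_sqrt {ω α : ι → ℝ} {V : ι → E} {n : ℝ}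
    (hV : ∀ j, ‖V j‖ = 1) (hn : n = ∑ j, ω j) (hn0 : 0 < n) (hα : ∑ j, α j = 1) :
    ‖n⁻¹ • ∑ j, ω j • V j - ∑ j, α j • V j‖ ≤
      √(1 / n ^ 2 *
        ∑ j, ∑ j', |ω j - n * α j| * |ω j' - n * α j'| * angle (V j) (V j') ^ 2 / 2) := by
  set c : ι → ℝ := fun j => (ω j - n * α j) / n with hcdef
  have hvec : n⁻¹ • ∑ j, ω j • V j - ∑ j, α j • V j = ∑ j, c j • V j := by
    rw [smul_sum, ← sum_sub_distrib]
    refine sum_congr rfl fun j _ => ?_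
    rw [smul_smul, ← sub_smul, hcdef]
    congr 1
    field_simp
  have hc : ∑ j, c j = 0 := by
    simp only [hcdef, ← sum_div, sum_sub_distrib, ← mul_sum, hα, ← hn, mul_one, sub_self,
      zero_div]
  have hQ : 1 / n ^ 2 * ∑ j, ∑ j', |ω j - n * α j| * |ω j' - n * α j'| * angle (V j) (V j') ^ 2 / 2
      = ∑ j, ∑ j', |c j| * |c j'| * angle (V j) (V j') ^ 2 / 2 := by
    simp only [hcdef, abs_div, abs_of_pos hn0, mul_sum]
    refine sum_congr rfl fun j _ => sum_congr rfl fun j' _ => ?_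
    field_simp
  rw [hvec, hQ]
  exact Real.le_sqrt_of_sq_le (norm_sum_smul_sq_le_of_sum_eq_zero hV hc)

end Network

theorem dynamic_weight_reduction_error_general
    (N : ℕ)
    (V : Fin N → EuclideanSpace ℝ (Fin 3)) (hV : ∀ i, ‖V i‖ = 1)
    (ω : Fin N → Fin N → ℝ) (hω : ∀ i j, ω i j = 0 ∨ ω i j = 1)
    (α : Fin N → ℝ) (hα : ∀ i, 0 ≤ α i) (hαsum : ∑ i, α i = 1)
    (w : Fin N → EuclideanSpace ℝ (Fin 3))
    (n : Fin N → ℝ) (hn : ∀ i, n i = ∑ j, ω i j)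
    (O : Fin N → EuclideanSpace ℝ (Fin 3)) (hO : ∀ i, O i = ∑ j, ω i j • V j)
    (D : Fin N → EuclideanSpace ℝ (Fin 3)) (hD : ∀ i, D i = O i + w i)
    (Vα : EuclideanSpace ℝ (Fin 3)) (hVα : Vα = ∑ i, α i • V i)
    (wb : EuclideanSpace ℝ (Fin 3)) (hwb : wb = ∑ i, (α i / n i) • w i)
    (Q : Fin N → ℝ)
    (hQ : ∀ i, Q i = (1 / n i ^ 2) *
      ∑ j, ∑ j', |ω i j - n i * α j| * |ω i j' - n i * α j'| *
        InnerProductGeometry.angle (V j) (V j') ^ 2 / 2)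
    (hn0 : ∀ i, 0 < n i) (hO0 : ∀ i, O i ≠ 0) (hD0 : ∀ i, D i ≠ 0)
    (hVα0 : Vα ≠ 0) (hVαw : Vα + wb ≠ 0)
    (hEig : ∀ j, α j = ∑ i, α i * ω i j / n i) :
    ‖(∑ i, α i • phi (D i)) - ‖Vα‖ • phi (Vα + wb)‖ ≤
      2 * ‖wb‖ ^ 2 / ‖Vα‖
      + ∑ i, α i * (1 - ‖O i‖ / n i)
      + 2 * ∑ i, α i * (‖w i‖ / ‖O i‖) *
          ((1 - ‖Vα‖) + ‖w i‖ / ‖O i‖ + 2 * (1 - ‖O i‖ / n i) + Real.sqrt (Q i)) := by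
  have hω0 : ∀ i j, 0 ≤ ω i j := fun i j => by rcases hω i j with h | h <;> simp [h]
  have hOn : ∀ i, ‖O i‖ ≤ n i := fun i => by
    rw [hO, hn]
    exact norm_sum_smul_le_sum_of_norm_eq_one (hω0 i) hV
  have hVα1 : ‖Vα‖ ≤ 1 := by
    rw [hVα, ← hαsum]
    exact norm_sum_smul_le_sum_of_norm_eq_one hα hV
  have hmean : ∑ i, (α i / n i) • O i = Vα := by
    simp only [hO, hVα]
    exact sum_div_smul_sum_smul_eq_of_stationary V hEig
  have hd : ∀ i, ‖(n i)⁻¹ • O i - Vα‖ ≤ √(Q i) := fun i => by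
    rw [hO, hVα, hQ]
    exact norm_inv_smul_sum_smul_sub_sum_smul_le_sqrt hV (hn i) (hn0 i) hαsum
  have hOw : ∀ i, O i + w i ≠ 0 := fun i => hD i ▸ hD0 i
  simp only [phi, hD]
  exact norm_sum_smul_normalize_sub_le hα hO0 hOw hOn hVα0 hVα1 hVαw hmean hwb.symm hd

/-- Theorem (dynamic-weight reduction error bound with normalized eigenvector
centrality, Theorem 2 of the paper). -/
theorem dynamic_weight_reduction_error
    (N : ℕ) (hN : 0 < N)
    (V : Fin N → EuclideanSpace ℝ (Fin 3)) (hV : ∀ i, ‖V i‖ = 1)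
    (ω : Fin N → Fin N → ℝ) (hω : ∀ i j, ω i j = 0 ∨ ω i j = 1)
    (α : Fin N → ℝ) (hα : ∀ i, 0 ≤ α i) (hαsum : ∑ i, α i = 1)
    (w : Fin N → EuclideanSpace ℝ (Fin 3))
    (n : Fin N → ℝ) (hn : ∀ i, n i = ∑ j, ω i j)
    (O : Fin N → EuclideanSpace ℝ (Fin 3)) (hO : ∀ i, O i = ∑ j, ω i j • V j)
    (D : Fin N → EuclideanSpace ℝ (Fin 3)) (hD : ∀ i, D i = O i + w i)
    (Vα : EuclideanSpace ℝ (Fin 3)) (hVα : Vα = ∑ i, α i • V i)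
    (wb : EuclideanSpace ℝ (Fin 3)) (hwb : wb = ∑ i, (α i / n i) • w i)
    (Q : Fin N → ℝ)
    (hQ : ∀ i, Q i = (1 / n i ^ 2) *
      ∑ j, ∑ j', |ω i j - n i * α j| * |ω i j' - n i * α j'| *
        InnerProductGeometry.angle (V j) (V j') ^ 2 / 2)
    (hn0 : ∀ i, 0 < n i) (hO0 : ∀ i, O i ≠ 0) (hD0 : ∀ i, D i ≠ 0)
    (hVα0 : Vα ≠ 0) (hVαw : Vα + wb ≠ 0)
    (hEig : ∀ j, α j = ∑ i, α i * ω i j / n i) :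
    ‖(∑ i, α i • phi (D i)) - ‖Vα‖ • phi (Vα + wb)‖ ≤
      2 * ‖wb‖ ^ 2 / ‖Vα‖
      + ∑ i, α i * (1 - ‖O i‖ / n i)
      + 2 * ∑ i, α i * (‖w i‖ / ‖O i‖) *
          ((1 - ‖Vα‖) + ‖w i‖ / ‖O i‖ + 2 * (1 - ‖O i‖ / n i) + Real.sqrt (Q i)) :=
  dynamic_weight_reduction_error_general N V hV ω hω α hα hαsum w n hn O hO D hD Vα hVα wb hwb Q hQ
    hn0 hO0 hD0 hVα0 hVαw hEig
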